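/- (Remaining utility is maximal at the pivot, and PEU is at most the SEU summand.) Let t be a sequence and s a q-sequence with t ⊑ s. (i) If k₁ ≤ k₂ are extension positions of t in s, then u_rest(t,k₂,s) ≤ u_rest(t,k₁,s). (ii) Consequently PEU(t,s) ≤ u(t,s) + u_rest(t,s), where u_rest(t,s) = u_rest(t,pivot,s) and the pivot is the least extension position of t in s; summing over D, PEU(t) ≤ SEU(t). -/
import Mathlib


open scoped Classical

namespace TKUS

variable {I : Type*} [Fintype I] [LinearOrder I]

/-- `p` is the (0-based) position list of an instance of the sequence `t`
in the q-sequence `s`. -/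
def IsInstance (s : List (I →₀ ℕ)) (t : List (Finset I)) (p : List ℕ) : Prop :=
  p.length = t.length ∧ p.Chain' (· < ·) ∧
    ∀ v < t.length, p.getD v 0 < s.length ∧
      ∀ i ∈ t.getD v ∅, 0 < s.getD (p.getD v 0) 0 i

/-- `t ⊑ s` : `t` has at least one instance in `s`. -/
def Contains (s : List (I →₀ ℕ)) (t : List (Finset I)) : Prop :=
  ∃ p, IsInstance s t p

/-- `u(t,p,s)` : utility of `t` at position `p` in `s`. -/
def uPos (eu : I → ℝ) (s : List (I →₀ ℕ)) (t : List (Finset I)) (p : List ℕ) : ℝ :=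
  ∑ v ∈ Finset.range t.length, ∑ i ∈ t.getD v ∅,
    (s.getD (p.getD v 0) 0 i : ℝ) * eu i

/-- `u(t,s)` : the maximum utility over all instances of `t` in `s` (`0` if none). -/
noncomputable def uSeq (eu : I → ℝ) (s : List (I →₀ ℕ)) (t : List (Finset I)) : ℝ :=
  sSup {x | ∃ p, IsInstance s t p ∧ x = uPos eu s t p}

/-- the greatest item of the last itemset of `t`, as an element of `WithBot I`. -/
def iLast (t : List (Finset I)) : WithBot I :=
  (t.getLast?.getD ∅).max

/-- `u_rest(t,k,s)` : remaining utility of `t` at extension position `k` in `s`. -/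
def uRest (eu : I → ℝ) (s : List (I →₀ ℕ)) (t : List (Finset I)) (k : ℕ) : ℝ :=
  ∑ j ∈ Finset.range s.length, ∑ i ∈ (s.getD j 0).support,
    if k < j ∨ (j = k ∧ iLast t < (i : WithBot I)) then (s.getD j 0 i : ℝ) * eu i else 0

/-- `k` is an extension position of `t` in `s`. -/
def ExtPos (s : List (I →₀ ℕ)) (t : List (Finset I)) (k : ℕ) : Prop :=
  ∃ p, IsInstance s t p ∧ p.getLast?.getD 0 = k

/-- the pivot : the least extension position of `t` in `s`. -/
noncomputable def pivot (s : List (I →₀ ℕ)) (t : List (Finset I)) : ℕ :=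
  sInf {k | ExtPos s t k}

/-- `u_rest(t,s)` : remaining utility of `t` at the pivot. -/
noncomputable def uRestSeq (eu : I → ℝ) (s : List (I →₀ ℕ)) (t : List (Finset I)) : ℝ :=
  uRest eu s t (pivot s t)

/-- `PEU(t,p,s)`. -/
noncomputable def PEUpos (eu : I → ℝ) (s : List (I →₀ ℕ)) (t : List (Finset I))
    (p : List ℕ) : ℝ :=
  if 0 < uRest eu s t (p.getLast?.getD 0) then
    uPos eu s t p + uRest eu s t (p.getLast?.getD 0)
  else 0

/-- `PEU(t,s)` : maximum of `PEU(t,p,s)` over all instances. -/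
noncomputable def PEUseq (eu : I → ℝ) (s : List (I →₀ ℕ)) (t : List (Finset I)) : ℝ :=
  sSup {x | ∃ p, IsInstance s t p ∧ x = PEUpos eu s t p}

/-- `t'` is an extension-prefix of `t` : `t' = ⟨X₁,…,X_{r−1}, X'_r⟩` where
`X'_r` is a nonempty lower segment of `X_r`. -/
def ExtPrefix (t' t : List (Finset I)) : Prop :=
  t' ≠ [] ∧ t'.length ≤ t.length ∧
    (∀ v, v + 1 < t'.length → t'.getD v ∅ = t.getD v ∅) ∧
    (t'.getD (t'.length - 1) ∅).Nonempty ∧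
    t'.getD (t'.length - 1) ∅ ⊆ t.getD (t'.length - 1) ∅ ∧
    ∀ a ∈ t.getD (t'.length - 1) ∅ \ t'.getD (t'.length - 1) ∅,
      ∀ b ∈ t'.getD (t'.length - 1) ∅, b < a

/-- `t'` is a proper extension-prefix of `t`. -/
def ProperExtPrefix (t' t : List (Finset I)) : Prop :=
  ExtPrefix t' t ∧ t' ≠ t

/-- the length (total number of item occurrences) of a sequence. -/
def seqLen (t : List (Finset I)) : ℕ :=
  (t.map Finset.card).sum

/-- remove the greatest item from a finite itemset. -/
def delMax (X : Finset I) : Finset I :=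
  X.filter fun i => (i : WithBot I) ≠ X.max

/-- the parent of a sequence: delete the greatest item of the last itemset
(dropping that itemset entirely if it becomes empty). -/
def parent (t : List (Finset I)) : List (Finset I) :=
  match t.getLast? with
  | none => []
  | some X => if delMax X = ∅ then t.dropLast else t.dropLast ++ [delMax X]

/-- `u(s)` : utility of a whole q-sequence. -/
def uQ (eu : I → ℝ) (s : List (I →₀ ℕ)) : ℝ :=
  ∑ j ∈ Finset.range s.length, ∑ i ∈ (s.getD j 0).support,
    (s.getD j 0 i : ℝ) * eu i

/-- `u(t)` : utility of `t` in a database `D`. -/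
noncomputable def uDB (eu : I → ℝ) (D : Multiset (List (I →₀ ℕ)))
    (t : List (Finset I)) : ℝ :=
  (D.map fun s => if Contains s t then uSeq eu s t else 0).sum

/-- `PEU(t)` over a database. -/
noncomputable def PEUDB (eu : I → ℝ) (D : Multiset (List (I →₀ ℕ)))
    (t : List (Finset I)) : ℝ :=
  (D.map fun s => if Contains s t then PEUseq eu s t else 0).sum

/-- `RSU(t,s)`. -/
noncomputable def RSUseq (eu : I → ℝ) (s : List (I →₀ ℕ)) (t : List (Finset I)) : ℝ :=
  if Contains s t then PEUseq eu s (parent t) else 0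

/-- `RSU(t)` over a database. -/
noncomputable def RSUDB (eu : I → ℝ) (D : Multiset (List (I →₀ ℕ)))
    (t : List (Finset I)) : ℝ :=
  (D.map fun s => RSUseq eu s t).sum

/-- `SWU(t)` over a database. -/
noncomputable def SWUDB (eu : I → ℝ) (D : Multiset (List (I →₀ ℕ)))
    (t : List (Finset I)) : ℝ :=
  (D.map fun s => if Contains s t then uQ eu s else 0).sum

/-- `SEU(t)` over a database. -/
noncomputable def SEUDB (eu : I → ℝ) (D : Multiset (List (I →₀ ℕ)))
    (t : List (Finset I)) : ℝ :=
  (D.map fun s => if Contains s t then uSeq eu s t + uRestSeq eu s t else 0).sum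

/-- `t' ⊴ t` : `t'` is a subsequence of `t`. -/
def Subseq (t' t : List (Finset I)) : Prop :=
  ∃ p : List ℕ, p.length = t'.length ∧ p.Chain' (· < ·) ∧
    ∀ v < t'.length, p.getD v 0 < t.length ∧ t'.getD v ∅ ⊆ t.getD (p.getD v 0) ∅

/-- `t` is a top-k HUSP with respect to the candidate set `C`. -/
def IsTopK (eu : I → ℝ) (D : Multiset (List (I →₀ ℕ))) (k : ℕ)
    (C : Finset (List (Finset I))) (t : List (Finset I)) : Prop :=
  t ∈ C ∧ (C.filter fun r => uDB eu D t < uDB eu D r).card < k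

lemma uRest_nonneg' (eu : I → ℝ) (heu : ∀ i, 0 < eu i) (s : List (I →₀ ℕ))
    (t : List (Finset I)) (k : ℕ) : 0 ≤ uRest eu s t k := by
  apply Finset.sum_nonneg; intro j _
  apply Finset.sum_nonneg; intro i _
  split
  · exact mul_nonneg (Nat.cast_nonneg _) (le_of_lt (heu i))
  · exact le_rfl

lemma uRest_anti' (eu : I → ℝ) (heu : ∀ i, 0 < eu i) (s : List (I →₀ ℕ))
    (t : List (Finset I)) {k₁ k₂ : ℕ} (h : k₁ ≤ k₂) :
    uRest eu s t k₂ ≤ uRest eu s t k₁ := by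
  apply Finset.sum_le_sum; intro j _
  apply Finset.sum_le_sum; intro i _
  by_cases h2 : k₂ < j ∨ (j = k₂ ∧ iLast t < (i : WithBot I))
  · have h1 : k₁ < j ∨ (j = k₁ ∧ iLast t < (i : WithBot I)) := by
      rcases h2 with h2 | ⟨rfl, _⟩
      · exact Or.inl (lt_of_le_of_lt h h2)
      · rcases lt_or_eq_of_le h with h' | h'
        · exact Or.inl h'
        · exact Or.inr ⟨h'.symm, by assumption⟩
    rw [if_pos h1, if_pos h2]
  · rw [if_neg h2]
    split
    · exact mul_nonneg (Nat.cast_nonneg _) (le_of_lt (heu i))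
    · exact le_rfl

lemma uPos_nonneg' (eu : I → ℝ) (heu : ∀ i, 0 < eu i) (s : List (I →₀ ℕ))
    (t : List (Finset I)) (p : List ℕ) : 0 ≤ uPos eu s t p := by
  apply Finset.sum_nonneg; intro v _
  apply Finset.sum_nonneg; intro i _
  exact mul_nonneg (Nat.cast_nonneg _) (le_of_lt (heu i))

lemma uPos_le_uQ' (eu : I → ℝ) (heu : ∀ i, 0 < eu i) (s : List (I →₀ ℕ))
    (t : List (Finset I)) (p : List ℕ) (hp : IsInstance s t p) :
    uPos eu s t p ≤ uQ eu s := by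
  obtain ⟨hlen, hchain, hall⟩ := hp
  set F : ℕ → ℝ := fun j => ∑ i ∈ (s.getD j 0).support, (s.getD j 0 i : ℝ) * eu i with hF
  have hFnn : ∀ j, 0 ≤ F j := fun j =>
    Finset.sum_nonneg fun i _ => mul_nonneg (Nat.cast_nonneg _) (le_of_lt (heu i))
  have step1 : uPos eu s t p ≤ ∑ v ∈ Finset.range t.length, F (p.getD v 0) := by
    apply Finset.sum_le_sum; intro v hv
    rw [Finset.mem_range] at hv
    apply Finset.sum_le_sum_of_subset_of_nonneg
    · intro i hi
      exact Finsupp.mem_support_iff.2 ((hall v hv).2 i hi).ne'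
    · intro i _ _
      exact mul_nonneg (Nat.cast_nonneg _) (le_of_lt (heu i))
  have hmono : ∀ v w, v < w → w < t.length → p.getD v 0 < p.getD w 0 := by
    intro v w hvw hw
    have hpw : w < p.length := by omega
    have hpv : v < p.length := by omega
    rw [List.getD_eq_getElem p 0 hpv, List.getD_eq_getElem p 0 hpw]
    exact List.pairwise_iff_getElem.1 (List.isChain_iff_pairwise.1 hchain) v w hpv hpw hvw
  have hinj : ∀ v ∈ Finset.range t.length, ∀ w ∈ Finset.range t.length,
      p.getD v 0 = p.getD w 0 → v = w := by
    intro v hv w hw he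
    rw [Finset.mem_range] at hv hw
    rcases lt_trichotomy v w with h | h | h
    · exact absurd he (ne_of_lt (hmono v w h hw))
    · exact h
    · exact absurd he.symm (ne_of_lt (hmono w v h hv))
  have step2 : ∑ v ∈ Finset.range t.length, F (p.getD v 0)
      = ∑ j ∈ (Finset.range t.length).image (fun v => p.getD v 0), F j :=
    (Finset.sum_image hinj).symm
  have step3 : ∑ j ∈ (Finset.range t.length).image (fun v => p.getD v 0), F j
      ≤ ∑ j ∈ Finset.range s.length, F j := by
    apply Finset.sum_le_sum_of_subset_of_nonneg
    · intro j hj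
      obtain ⟨v, hv, rfl⟩ := Finset.mem_image.1 hj
      rw [Finset.mem_range] at hv ⊢
      exact (hall v hv).1
    · intro j _ _; exact hFnn j
  calc uPos eu s t p ≤ _ := step1
    _ = _ := step2
    _ ≤ _ := step3
    _ = uQ eu s := rfl

lemma PEUseq_le' (eu : I → ℝ) (heu : ∀ i, 0 < eu i) (s : List (I →₀ ℕ))
    (t : List (Finset I)) (hs : Contains s t) :
    PEUseq eu s t ≤ uSeq eu s t + uRest eu s t (pivot s t) := by
  obtain ⟨p₀, hp₀⟩ := hs
  have hbdd : BddAbove {x | ∃ p, IsInstance s t p ∧ x = uPos eu s t p} := by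
    refine ⟨uQ eu s, ?_⟩
    rintro x ⟨p, hp, rfl⟩
    exact uPos_le_uQ' eu heu s t p hp
  have huSeq_nn : 0 ≤ uSeq eu s t :=
    le_trans (uPos_nonneg' eu heu s t p₀) (le_csSup hbdd ⟨p₀, hp₀, rfl⟩)
  have hRHS_nn : 0 ≤ uSeq eu s t + uRest eu s t (pivot s t) :=
    add_nonneg huSeq_nn (uRest_nonneg' eu heu s t _)
  refine csSup_le ⟨PEUpos eu s t p₀, ⟨p₀, hp₀, rfl⟩⟩ ?_
  rintro x ⟨p, hp, rfl⟩
  unfold PEUpos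
  split
  · have h1 : uPos eu s t p ≤ uSeq eu s t := le_csSup hbdd ⟨p, hp, rfl⟩
    have hpiv : pivot s t ≤ p.getLast?.getD 0 := Nat.sInf_le ⟨p, hp, rfl⟩
    have h2 : uRest eu s t (p.getLast?.getD 0) ≤ uRest eu s t (pivot s t) :=
      uRest_anti' eu heu s t hpiv
    exact add_le_add h1 h2
  · exact hRHS_nn

/-- (i) remaining utility is antitone in the extension position,
so it is maximal at the pivot; (ii) `PEU(t,s) ≤ u(t,s) + u_rest(t,s)` and, summing
over the database, `PEU(t) ≤ SEU(t)`. -/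
theorem uRest_antitone_and_PEU_le_SEU
    (eu : I → ℝ) (heu : ∀ i, 0 < eu i)
    (D : Multiset (List (I →₀ ℕ)))
    (t : List (Finset I)) (ht : ∀ X ∈ t, X.Nonempty)
    (s : List (I →₀ ℕ)) (hs : Contains s t) :
    (∀ k₁ k₂, ExtPos s t k₁ → ExtPos s t k₂ → k₁ ≤ k₂ →
      uRest eu s t k₂ ≤ uRest eu s t k₁) ∧
    PEUseq eu s t ≤ uSeq eu s t + uRest eu s t (pivot s t) ∧
    PEUDB eu D t ≤ SEUDB eu D t := by
  refine ⟨fun k₁ k₂ _ _ h => uRest_anti' eu heu s t h, PEUseq_le' eu heu s t hs, ?_⟩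
  unfold PEUDB SEUDB
  apply Multiset.sum_map_le_sum_map
  intro s' _
  by_cases h : Contains s' t
  · simp only [if_pos h]
    exact PEUseq_le' eu heu s' t h
  · simp only [if_neg h]; exact le_rfl

end TKUS
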